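/- The map ex is injective: for all binary words x and y, ex(x) = ex(y) implies x = y. -/
import Mathlib


/-- The morphism β with β(0)=01, β(1)=10, extended to words. -/
def beta (x : List Bool) : List Bool := x.flatMap (fun b => [b, !b])

/-- The map ex : x ↦ β(x)·11·0^(|x|²+3)·β(x)·11·0^(|x|²+3). -/
def ex (x : List Bool) : List Bool :=
  beta x ++ [true, true] ++ List.replicate (x.length ^ 2 + 3) false ++
  beta x ++ [true, true] ++ List.replicate (x.length ^ 2 + 3) false

/-- D is the image of ex. -/
def D : Set (List Bool) := Set.range ex

lemma beta_cons (b : Bool) (t : List Bool) : beta (b :: t) = b :: (!b) :: beta t := rfl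

lemma beta_len (x : List Bool) : (beta x).length = 2 * x.length := by
  induction x with
  | nil => rfl
  | cons b t ih => rw [beta_cons]; simp [ih]; omega

lemma beta_inj : Function.Injective beta := by
  intro x y h
  induction x generalizing y with
  | nil => cases y with
    | nil => rfl
    | cons c t => simp [beta] at h
  | cons b t ih =>
    cases y with
    | nil => simp [beta] at h
    | cons c s =>
      rw [beta_cons, beta_cons] at h
      simp only [List.cons.injEq] at h
      rw [h.1, ih h.2.2]

lemma ex_len (x : List Bool) : (ex x).length = 2 * (2 * x.length + 2 + (x.length ^ 2 + 3)) := by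
  simp [ex, beta_len]; ring

/-- The map ex is injective. -/
theorem stmt_5 : Function.Injective ex := by
  intro x y h
  have hl : (ex x).length = (ex y).length := by rw [h]
  rw [ex_len, ex_len] at hl
  have hxy : x.length = y.length := by nlinarith [hl]
  have hbx : (ex x).take (2 * x.length) = beta x := by
    simp [ex, List.take_append, beta_len]
  have hby : (ex y).take (2 * y.length) = beta y := by
    simp [ex, List.take_append, beta_len]
  apply beta_inj
  rw [← hbx, ← hby, h, hxy]
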